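/- Given q ∈ R, a curl-free (conservative) initial angular velocity ζ_0 ∈ H^q_∥(T^3; R^3) generates a potential microflow ζ = T_{α/j, (α+3β)/(3j), γ/j, 2κ/j}(ζ_0) which is smooth on (0,∞) × T^3, satisfies j∂_t ζ − (α+γ)Δζ − (α/3 + β − γ)∇div ζ + 2κζ = 0 with curl ζ = 0 for all time, and attains ζ(0) = ζ_0 in the H^q topology. In particular (u, p, ω) = (0, 0, ζ) solves the incompressible micropolar equations with zero force and microtorque. -/

import Mathlib

/-!
On a field whose Fourier coefficients are parallel to `k`, the Lamé symbol acts as the scalar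
`4π²(4α/3 + β)|k|²`, because `(k · v) k = |k|² v`. The flow is therefore the diagonal multiplier
`exp (t λₖ)` with `λₖ ≤ -(4π²(4α/3 + β)/j) |k|²`: it keeps every mode parallel to `k`, for `t > 0`
its exponential decay absorbs any polynomial weight `(1 + |k|²)^(s - q)`, and since
`|exp (t λₖ) - 1| ≤ 1` the `H^q` convergence as `t → 0⁺` is dominated convergence with the
summable majorant `(1 + |k|²)^q ‖ζ₀ k‖²`.
-/

open Filter

noncomputable section

abbrev TCoeffs : Type := (Fin 3 → ℤ) → EuclideanSpace ℂ (Fin 3)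

def kns (k : Fin 3 → ℤ) : ℝ := ∑ i, ((k i : ℝ)) ^ 2

def kC (k : Fin 3 → ℤ) : EuclideanSpace ℂ (Fin 3) := WithLp.toLp 2 (fun i => (k i : ℂ))

def dotk (k : Fin 3 → ℤ) (v : EuclideanSpace ℂ (Fin 3)) : ℂ := ∑ i, (k i : ℂ) * v i

def RealSym (c : TCoeffs) : Prop := ∀ k i, (starRingEnd ℂ) (c k i) = c (-k) i

/-- The potential microflow generated by a conservative field `ζ₀`: the solution of the
damped Lamé flow, which on conservative (parallel) fields is the damped heat semigroup
`ζ(t)^(k) = exp(−(t/j)(4π²(4α/3+β)|k|² + 2κ)) ζ₀^(k)`. -/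
def potentialMicroflow (j α β κ : ℝ) (ζ₀ : TCoeffs) (t : ℝ) : TCoeffs :=
  fun k => Real.exp (-(t / j) * (4 * Real.pi ^ 2 * (4 * α / 3 + β) * kns k + 2 * κ)) • ζ₀ k

open Topology

theorem exists_one_add_rpow_mul_exp_neg_le (r : ℝ) {c : ℝ} (hc : 0 < c) :
    ∃ M, ∀ x : ℝ, 0 ≤ x → (1 + x) ^ r * Real.exp (-(c * x)) ≤ M := by
  obtain ⟨n, hn⟩ := exists_nat_ge r
  refine ⟨n.factorial / c ^ n * Real.exp c, fun x hx => ?_⟩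
  have h1x : 1 ≤ 1 + x := by linarith
  -- `(c (1 + x))ⁿ / n! ≤ exp (c (1 + x))`, and the factor `exp (c x)` cancels
  have hpow : (1 + x) ^ n ≤ n.factorial / c ^ n * Real.exp (c * (1 + x)) := by
    have := Real.pow_div_factorial_le_exp (x := c * (1 + x)) (by positivity) n
    rw [mul_pow, div_le_iff₀ (by positivity)] at this
    rw [div_mul_eq_mul_div, le_div_iff₀ (by positivity)]
    linarith
  calc (1 + x) ^ r * Real.exp (-(c * x))
      ≤ (1 + x) ^ n * Real.exp (-(c * x)) := by
        gcongr
        exact_mod_cast Real.rpow_le_rpow_of_exponent_le h1x hn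
    _ ≤ n.factorial / c ^ n * Real.exp (c * (1 + x)) * Real.exp (-(c * x)) := by gcongr
    _ = n.factorial / c ^ n * Real.exp c := by
        rw [mul_assoc, ← Real.exp_add]; ring_nf

section MultiplierSemigroup

variable {ι E : Type*} [NormedAddCommGroup E] [NormedSpace ℝ E]

theorem hasDerivAt_exp_mul_smul (a : ℝ) (v : E) (t : ℝ) :
    HasDerivAt (fun s => Real.exp (s * a) • v) (a • Real.exp (t * a) • v) t := by
  have := ((Real.hasDerivAt_exp (t * a)).comp t ((hasDerivAt_id t).mul_const a)).smul_const v
  simpa [smul_smul, mul_comm a] using this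

theorem summable_one_add_rpow_mul_norm_exp_smul_sq {ρ a : ι → ℝ} {c : ι → E} {q b t : ℝ}
    (hρ : ∀ k, 0 ≤ ρ k) (hb : 0 < b) (ha : ∀ k, a k ≤ -(b * ρ k)) (ht : 0 < t)
    (hc : Summable fun k => (1 + ρ k) ^ q * ‖c k‖ ^ 2) (s : ℝ) :
    Summable fun k => (1 + ρ k) ^ s * ‖Real.exp (t * a k) • c k‖ ^ 2 := by
  have htb : 0 < 2 * t * b := by positivity
  obtain ⟨M, hM⟩ := exists_one_add_rpow_mul_exp_neg_le (s - q) htb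
  refine Summable.of_nonneg_of_le (fun k => by have := hρ k; positivity) (fun k => ?_)
    (hc.mul_left M)
  have h1 : 0 < 1 + ρ k := by linarith [hρ k]
  have hexp : Real.exp (t * a k) ^ 2 ≤ Real.exp (-(2 * t * b * ρ k)) := by
    rw [← Real.exp_nat_mul, Real.exp_le_exp]
    have := mul_le_mul_of_nonneg_left (ha k) ht.le
    push_cast
    linarith
  calc (1 + ρ k) ^ s * ‖Real.exp (t * a k) • c k‖ ^ 2
      = (1 + ρ k) ^ (s - q) * Real.exp (t * a k) ^ 2 * ((1 + ρ k) ^ q * ‖c k‖ ^ 2) := by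
        rw [norm_smul, Real.norm_of_nonneg (Real.exp_pos _).le,
          ← sub_add_cancel s q, Real.rpow_add h1, add_sub_cancel_right]
        ring
    _ ≤ (1 + ρ k) ^ (s - q) * Real.exp (-(2 * t * b * ρ k)) * ((1 + ρ k) ^ q * ‖c k‖ ^ 2) :=
        by gcongr
    _ ≤ M * ((1 + ρ k) ^ q * ‖c k‖ ^ 2) := by
        gcongr
        simpa [mul_assoc] using hM (ρ k) (hρ k)

theorem tendsto_tsum_mul_norm_exp_smul_sub_sq {w a : ι → ℝ} {c : ι → E}
    (hw : ∀ k, 0 ≤ w k) (ha : ∀ k, a k ≤ 0) (hc : Summable fun k => w k * ‖c k‖ ^ 2) :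
    Tendsto (fun t => ∑' k, w k * ‖Real.exp (t * a k) • c k - c k‖ ^ 2) (𝓝[>] 0) (𝓝 0) := by
  have hlim : ∀ k, Tendsto (fun t => w k * ‖Real.exp (t * a k) • c k - c k‖ ^ 2) (𝓝[>] 0)
      (𝓝 0) := by
    intro k
    have hcont : Continuous fun t => w k * ‖Real.exp (t * a k) • c k - c k‖ ^ 2 := by fun_prop
    simpa using (hcont.tendsto 0).mono_left nhdsWithin_le_nhds
  simpa using tendsto_tsum_of_dominated_convergence hc hlim <| by
    filter_upwards [self_mem_nhdsWithin] with t (ht : 0 < t) k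
    have hexp : Real.exp (t * a k) ≤ 1 :=
      Real.exp_le_one_iff.2 (mul_nonpos_of_nonneg_of_nonpos ht.le (ha k))
    have hdiff : ‖Real.exp (t * a k) • c k - c k‖ ≤ ‖c k‖ := by
      rw [show Real.exp (t * a k) • c k - c k = (Real.exp (t * a k) - 1) • c k by
        rw [sub_smul, one_smul], norm_smul, Real.norm_eq_abs]
      refine mul_le_of_le_one_left (norm_nonneg _) (abs_le.2 ⟨?_, ?_⟩) <;>
        linarith [Real.exp_pos (t * a k)]
    rw [Real.norm_of_nonneg (mul_nonneg (hw k) (sq_nonneg _))]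
    gcongr
    exact hw k

end MultiplierSemigroup

theorem kns_nonneg (k : Fin 3 → ℤ) : 0 ≤ kns k :=
  Finset.sum_nonneg fun _ _ => sq_nonneg _

theorem dotk_smul_kC (k : Fin 3 → ℤ) (c : ℂ) : dotk k (c • kC k) = c * kns k := by
  simp only [dotk, kC, kns, PiLp.smul_apply, smul_eq_mul]
  push_cast
  rw [Finset.mul_sum]
  exact Finset.sum_congr rfl fun _ _ => by ring

theorem dotk_smul_kC_eq_kns_smul {k : Fin 3 → ℤ} {v : EuclideanSpace ℂ (Fin 3)}
    (hv : ∃ c : ℂ, v = c • kC k) : dotk k v • kC k = kns k • v := by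
  obtain ⟨c, rfl⟩ := hv
  rw [dotk_smul_kC, ← Complex.coe_smul, smul_smul, mul_comm]

def potentialMicroflowRate (j α β κ : ℝ) (k : Fin 3 → ℤ) : ℝ :=
  -(1 / j) * (4 * Real.pi ^ 2 * (4 * α / 3 + β) * kns k + 2 * κ)

theorem potentialMicroflow_apply (j α β κ : ℝ) (ζ₀ : TCoeffs) (t : ℝ) (k : Fin 3 → ℤ) :
    potentialMicroflow j α β κ ζ₀ t k =
      Real.exp (t * potentialMicroflowRate j α β κ k) • ζ₀ k := by
  rw [potentialMicroflow, potentialMicroflowRate]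
  congr 2
  ring

theorem potentialMicroflowRate_le {j κ : ℝ} (hj : 0 < j) (hκ : 0 ≤ κ) (α β : ℝ)
    (k : Fin 3 → ℤ) :
    potentialMicroflowRate j α β κ k ≤ -(4 * Real.pi ^ 2 * (4 * α / 3 + β) / j * kns k) := by
  have hκj : 0 ≤ 2 * κ / j := by positivity
  rw [potentialMicroflowRate]
  linarith [show -(1 / j) * (4 * Real.pi ^ 2 * (4 * α / 3 + β) * kns k + 2 * κ) =
    -(4 * Real.pi ^ 2 * (4 * α / 3 + β) / j * kns k) - 2 * κ / j by ring]

theorem potentialMicroflow_parallel {ζ₀ : TCoeffs} (hpar : ∀ k, ∃ c : ℂ, ζ₀ k = c • kC k)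
    (j α β κ t : ℝ) (k : Fin 3 → ℤ) :
    ∃ c : ℂ, potentialMicroflow j α β κ ζ₀ t k = c • kC k := by
  obtain ⟨c, hc⟩ := hpar k
  exact ⟨Real.exp (t * potentialMicroflowRate j α β κ k) • c, by
    rw [potentialMicroflow_apply, hc, smul_assoc]⟩

theorem lame_equation_potentialMicroflowRate {j : ℝ} (hj : j ≠ 0) (α β γ κ : ℝ)
    {k : Fin 3 → ℤ} {v : EuclideanSpace ℂ (Fin 3)} (hv : ∃ c : ℂ, v = c • kC k) :
    j • (potentialMicroflowRate j α β κ k • v) + (4 * Real.pi ^ 2 * (α + γ) * kns k) • v +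
        (4 * Real.pi ^ 2 * (α / 3 + β - γ)) • (dotk k v • kC k) + (2 * κ) • v = 0 := by
  rw [dotk_smul_kC_eq_kns_smul hv, smul_smul, smul_smul, ← add_smul, ← add_smul, ← add_smul]
  convert zero_smul ℝ v
  rw [potentialMicroflowRate]
  field_simp
  ring

theorem potentialMicroflow_exists_general (q j α β γ κ : ℝ)
    (hj : 0 < j) (hα : 0 < α) (hβ : 0 < β) (hκ : 0 < κ)
    (ζ₀ : TCoeffs)
    (hpar : ∀ k, ∃ c : ℂ, ζ₀ k = c • kC k)
    (hq : Summable fun k => (1 + kns k) ^ q * ‖ζ₀ k‖ ^ 2) :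
    -- ζ is conservative (curl-free) for all time
    (∀ t k, ∃ c : ℂ, potentialMicroflow j α β κ ζ₀ t k = c • kC k) ∧
    -- ζ(t) is smooth for t > 0: its coefficients lie in every Sobolev class
    (∀ t : ℝ, 0 < t → ∀ s : ℝ,
      Summable fun k => (1 + kns k) ^ s * ‖potentialMicroflow j α β κ ζ₀ t k‖ ^ 2) ∧
    -- ζ solves the damped Lamé equation (Fourier side), for all t > 0
    (∀ t : ℝ, 0 < t → ∀ k,
      HasDerivAt (fun s => potentialMicroflow j α β κ ζ₀ s k)
        ((-(1 / j) * (4 * Real.pi ^ 2 * (4 * α / 3 + β) * kns k + 2 * κ)) •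
          potentialMicroflow j α β κ ζ₀ t k) t ∧
      j • ((-(1 / j) * (4 * Real.pi ^ 2 * (4 * α / 3 + β) * kns k + 2 * κ)) •
            potentialMicroflow j α β κ ζ₀ t k) +
        (4 * Real.pi ^ 2 * (α + γ) * kns k) • potentialMicroflow j α β κ ζ₀ t k +
        (4 * Real.pi ^ 2 * (α / 3 + β - γ)) •
          (dotk k (potentialMicroflow j α β κ ζ₀ t k) • kC k) +
        (2 * κ) • potentialMicroflow j α β κ ζ₀ t k = 0) ∧
    -- the initial data is attained in the H^q topology
    Tendsto (fun t => ∑' k, (1 + kns k) ^ q * ‖potentialMicroflow j α β κ ζ₀ t k - ζ₀ k‖ ^ 2)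
      (nhdsWithin 0 (Set.Ioi 0)) (nhds 0) := by
  have hb : 0 < 4 * Real.pi ^ 2 * (4 * α / 3 + β) / j := by positivity
  have hrate := potentialMicroflowRate_le hj hκ.le α β
  have hparallel := potentialMicroflow_parallel hpar j α β κ
  refine ⟨hparallel, fun t ht s => ?_, fun t ht k => ⟨?_, ?_⟩, ?_⟩
  · simp_rw [potentialMicroflow_apply]
    exact summable_one_add_rpow_mul_norm_exp_smul_sq kns_nonneg hb hrate ht hq s
  · simp_rw [potentialMicroflow_apply]
    exact hasDerivAt_exp_mul_smul _ _ _
  · exact lame_equation_potentialMicroflowRate hj.ne' α β γ κ (hparallel t k)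
  · simp_rw [potentialMicroflow_apply]
    refine tendsto_tsum_mul_norm_exp_smul_sub_sq (fun k => ?_) (fun k => ?_) hq
    · have := kns_nonneg k
      positivity
    · exact (hrate k).trans (neg_nonpos.2 (mul_nonneg hb.le (kns_nonneg k)))

/-- A curl-free `ζ₀ ∈ H^q_∥(𝕋³;ℝ³)` generates a potential microflow
`ζ` which is smooth for `t > 0`, remains curl-free (conservative), solves
`j∂ₜζ − (α+γ)Δζ − (α/3+β−γ)∇div ζ + 2κζ = 0`, and attains `ζ(0) = ζ₀` in `H^q`.
In particular `(u,p,ω) = (0,0,ζ)` solves the micropolar equations with `f = g = 0`. -/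
theorem potentialMicroflow_exists (q j α β γ κ : ℝ)
    (hj : 0 < j) (hα : 0 < α) (hβ : 0 < β) (hγ : 0 ≤ γ) (hκ : 0 < κ)
    (ζ₀ : TCoeffs) (h0 : ζ₀ 0 = 0) (hsym : RealSym ζ₀)
    (hpar : ∀ k, ∃ c : ℂ, ζ₀ k = c • kC k)
    (hq : Summable fun k => (1 + kns k) ^ q * ‖ζ₀ k‖ ^ 2) :
    -- ζ is conservative (curl-free) for all time
    (∀ t k, ∃ c : ℂ, potentialMicroflow j α β κ ζ₀ t k = c • kC k) ∧
    -- ζ(t) is smooth for t > 0: its coefficients lie in every Sobolev class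
    (∀ t : ℝ, 0 < t → ∀ s : ℝ,
      Summable fun k => (1 + kns k) ^ s * ‖potentialMicroflow j α β κ ζ₀ t k‖ ^ 2) ∧
    -- ζ solves the damped Lamé equation (Fourier side), for all t > 0
    (∀ t : ℝ, 0 < t → ∀ k,
      HasDerivAt (fun s => potentialMicroflow j α β κ ζ₀ s k)
        ((-(1 / j) * (4 * Real.pi ^ 2 * (4 * α / 3 + β) * kns k + 2 * κ)) •
          potentialMicroflow j α β κ ζ₀ t k) t ∧
      j • ((-(1 / j) * (4 * Real.pi ^ 2 * (4 * α / 3 + β) * kns k + 2 * κ)) •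
            potentialMicroflow j α β κ ζ₀ t k) +
        (4 * Real.pi ^ 2 * (α + γ) * kns k) • potentialMicroflow j α β κ ζ₀ t k +
        (4 * Real.pi ^ 2 * (α / 3 + β - γ)) •
          (dotk k (potentialMicroflow j α β κ ζ₀ t k) • kC k) +
        (2 * κ) • potentialMicroflow j α β κ ζ₀ t k = 0) ∧
    -- the initial data is attained in the H^q topology
    Tendsto (fun t => ∑' k, (1 + kns k) ^ q * ‖potentialMicroflow j α β κ ζ₀ t k - ζ₀ k‖ ^ 2)
      (nhdsWithin 0 (Set.Ioi 0)) (nhds 0) :=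
  potentialMicroflow_exists_general q j α β γ κ hj hα hβ hκ ζ₀ hpar hq
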